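/- For every prime power q there exists a linear code C of length n = 8 and redundancy r = 4 over GF(q) (i.e., dim C = 4) such that: (i) no nonzero codeword of C is a 4-burst (in particular, C has a decoder that detects any single 3-burst error); and (ii) C has a (2,3)-burst list decoder, i.e., no three distinct 3-bursts in GF(q)^8 lie in the same coset of C. Since r = 4 < (1 + 1/2)·3 = 4.5, this shows that the generalized Reiger bound for group codes fails when the hypothesis (ℓ+1)τ ≤ n (or ℓ | τ with 2τ ≤ n) is weakened to merely 2τ ≤ n. (Such a code is generated by the rows (1,*,*,0,1,0,0,0), (0,1,*,0,1,1,0,0), (0,0,1,1,0,*,1,0), (0,0,0,1,0,*,*,1), where the stars are arbitrary elements of GF(q).) -/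
import Mathlib


/-- A word `e ∈ F^n` is a `τ`-burst if its support is contained in `τ`
consecutive positions (equivalently, `e = 0` or the first and last nonzero
indexes `i ≤ j` satisfy `j - i < τ`). -/
def IsBurst {F : Type*} [Zero F] {n : ℕ} (τ : ℕ) (e : Fin n → F) : Prop :=
  ∃ a : ℕ, ∀ j : Fin n, e j ≠ 0 → a ≤ (j : ℕ) ∧ (j : ℕ) < a + τ

/-- A decoder `D` (returning lists, i.e. finite sets, of codewords) corrects any
single `τ`-burst error. -/
def Corrects {F : Type*} [AddCommGroup F] {n : ℕ}
    (D : (Fin n → F) → Finset (Fin n → F)) (C : Set (Fin n → F)) (τ : ℕ) : Prop :=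
  ∀ c ∈ C, ∀ e : Fin n → F, IsBurst τ e → c ∈ D (c + e)

/-- A decoder `D` detects any single `τ`-burst error: on input `c + e` it
returns `{c}` if `e = 0` and `∅` otherwise. -/
def Detects {F : Type*} [AddCommGroup F] {n : ℕ}
    (D : (Fin n → F) → Finset (Fin n → F)) (C : Set (Fin n → F)) (τ : ℕ) : Prop :=
  ∀ c ∈ C, ∀ e : Fin n → F, IsBurst τ e →
    (e = 0 → D (c + e) = {c}) ∧ (e ≠ 0 → D (c + e) = ∅)

/-- `C` has an `(ℓ,τ)`-burst list decoder: a decoder with lists of codewords of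
size at most `ℓ` that corrects any single `τ`-burst error. -/
def HasBurstListDecoder {F : Type*} [AddCommGroup F] {n : ℕ}
    (C : Set (Fin n → F)) (ℓ τ : ℕ) : Prop :=
  ∃ D : (Fin n → F) → Finset (Fin n → F),
    (∀ y, (D y : Set (Fin n → F)) ⊆ C) ∧ (∀ y, (D y).card ≤ ℓ) ∧ Corrects D C τ

/-- `C` has a decoder detecting any single `τ`-burst error. -/
def HasBurstDetector {F : Type*} [AddCommGroup F] {n : ℕ}
    (C : Set (Fin n → F)) (τ : ℕ) : Prop :=
  ∃ D : (Fin n → F) → Finset (Fin n → F),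
    (∀ y, (D y : Set (Fin n → F)) ⊆ C) ∧ Detects D C τ


-- AUX START


section ReigerAux

variable {F : Type*} [Field F]

/-- The code `{(a,b,c,c+d,a+b,b,c,d)}` described by its parity checks. -/
def reigerCode (F : Type*) [Field F] : Submodule F (Fin 8 → F) where
  carrier := {x | x 1 = x 5 ∧ x 2 = x 6 ∧ x 4 = x 0 + x 1 ∧ x 3 = x 2 + x 7}
  add_mem' := by
    rintro a b ⟨h1, h2, h3, h4⟩ ⟨g1, g2, g3, g4⟩
    refine ⟨?_, ?_, ?_, ?_⟩ <;>
      simp only [Pi.add_apply, h1, h2, h3, h4, g1, g2, g3, g4] <;> ring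
  zero_mem' := by simp
  smul_mem' := by
    rintro r a ⟨h1, h2, h3, h4⟩
    refine ⟨?_, ?_, ?_, ?_⟩ <;>
      simp only [Pi.smul_apply, smul_eq_mul, h1, h2, h3, h4] <;> ring

theorem mem_reigerCode {x : Fin 8 → F} :
    x ∈ reigerCode F ↔ (x 1 = x 5 ∧ x 2 = x 6 ∧ x 4 = x 0 + x 1 ∧ x 3 = x 2 + x 7) := Iff.rfl

def reigerCodeEquiv (F : Type*) [Field F] : (Fin 4 → F) ≃ₗ[F] reigerCode F where
  toFun v := ⟨![v 0, v 1, v 2, v 2 + v 3, v 0 + v 1, v 1, v 2, v 3], by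
    exact ⟨rfl, rfl, rfl, rfl⟩⟩
  map_add' x y := by ext j; fin_cases j <;> first | rfl | (simp; ring)
  map_smul' r x := by ext j; fin_cases j <;> first | rfl | (simp; ring)
  invFun x := ![x.1 0, x.1 1, x.1 2, x.1 7]
  left_inv v := by funext j; fin_cases j <;> rfl
  right_inv := by
    rintro ⟨x, h1, h2, h3, h4⟩
    apply Subtype.ext
    funext j
    fin_cases j <;> simp_all <;> rfl

theorem finrank_reigerCode : Module.finrank F (reigerCode F) = 4 := by
  rw [← (reigerCodeEquiv F).finrank_eq]
  simp

/-- Entries of a windowed word vanish outside the window. -/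
theorem win_zero {x : Fin 8 → F} {p τ : ℕ}
    (hx : ∀ j : Fin 8, x j ≠ 0 → p ≤ (j : ℕ) ∧ (j : ℕ) < p + τ)
    (j : Fin 8) (hj : (j : ℕ) < p ∨ p + τ ≤ (j : ℕ)) : x j = 0 := by
  by_contra h
  have := hx j h
  omega

theorem reigerIsBurst4_eq_zero {c : Fin 8 → F} (hc : c ∈ reigerCode F)
    (hb : ∃ a : ℕ, ∀ j : Fin 8, c j ≠ 0 → a ≤ (j : ℕ) ∧ (j : ℕ) < a + 4) : c = 0 := by
  obtain ⟨h1, h2, h3, h4⟩ := hc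
  obtain ⟨a, ha⟩ := hb
  rcases Nat.lt_or_ge a 4 with h | h
  · interval_cases a
    · -- window {0,1,2,3}
      have z4 : c 4 = 0 := win_zero ha 4 (by omega)
      have z5 : c 5 = 0 := win_zero ha 5 (by omega)
      have z6 : c 6 = 0 := win_zero ha 6 (by omega)
      have z7 : c 7 = 0 := win_zero ha 7 (by omega)
      have z1 : c 1 = 0 := by rw [h1, z5]
      have z2 : c 2 = 0 := by rw [h2, z6]
      have z0 : c 0 = 0 := by
        have := h3; rw [z4, z1] at this; linear_combination -this
      have z3 : c 3 = 0 := by rw [h4, z2, z7, add_zero]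
      funext j; fin_cases j <;> assumption
    · -- window {1,2,3,4}
      have z0 : c 0 = 0 := win_zero ha 0 (by omega)
      have z5 : c 5 = 0 := win_zero ha 5 (by omega)
      have z6 : c 6 = 0 := win_zero ha 6 (by omega)
      have z7 : c 7 = 0 := win_zero ha 7 (by omega)
      have z1 : c 1 = 0 := by rw [h1, z5]
      have z2 : c 2 = 0 := by rw [h2, z6]
      have z4 : c 4 = 0 := by rw [h3, z0, z1, add_zero]
      have z3 : c 3 = 0 := by rw [h4, z2, z7, add_zero]
      funext j; fin_cases j <;> assumption
    · -- window {2,3,4,5}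
      have z0 : c 0 = 0 := win_zero ha 0 (by omega)
      have z1 : c 1 = 0 := win_zero ha 1 (by omega)
      have z6 : c 6 = 0 := win_zero ha 6 (by omega)
      have z7 : c 7 = 0 := win_zero ha 7 (by omega)
      have z5 : c 5 = 0 := by rw [← h1, z1]
      have z2 : c 2 = 0 := by rw [h2, z6]
      have z4 : c 4 = 0 := by rw [h3, z0, z1, add_zero]
      have z3 : c 3 = 0 := by rw [h4, z2, z7, add_zero]
      funext j; fin_cases j <;> assumption
    · -- window {3,4,5,6}
      have z0 : c 0 = 0 := win_zero ha 0 (by omega)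
      have z1 : c 1 = 0 := win_zero ha 1 (by omega)
      have z2 : c 2 = 0 := win_zero ha 2 (by omega)
      have z7 : c 7 = 0 := win_zero ha 7 (by omega)
      have z5 : c 5 = 0 := by rw [← h1, z1]
      have z6 : c 6 = 0 := by rw [← h2, z2]
      have z4 : c 4 = 0 := by rw [h3, z0, z1, add_zero]
      have z3 : c 3 = 0 := by rw [h4, z2, z7, add_zero]
      funext j; fin_cases j <;> assumption
  · -- window ⊆ {4,5,6,7}
    have z0 : c 0 = 0 := win_zero ha 0 (by omega)
    have z1 : c 1 = 0 := win_zero ha 1 (by omega)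
    have z2 : c 2 = 0 := win_zero ha 2 (by omega)
    have z3 : c 3 = 0 := win_zero ha 3 (by omega)
    have z5 : c 5 = 0 := by rw [← h1, z1]
    have z6 : c 6 = 0 := by rw [← h2, z2]
    have z4 : c 4 = 0 := by rw [h3, z0, z1, add_zero]
    have z7 : c 7 = 0 := by
      have := h4; rw [z3, z2, zero_add] at this; linear_combination -this
    funext j; fin_cases j <;> assumption

/-- Two 3-bursts with close windows in the same coset are equal. -/
theorem close_eq {x y : Fin 8 → F} {p q : ℕ}
    (hx : ∀ j : Fin 8, x j ≠ 0 → p ≤ (j : ℕ) ∧ (j : ℕ) < p + 3)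
    (hy : ∀ j : Fin 8, y j ≠ 0 → q ≤ (j : ℕ) ∧ (j : ℕ) < q + 3)
    (hpq : p ≤ q + 1) (hqp : q ≤ p + 1)
    (hxy : x - y ∈ reigerCode F) : x = y := by
  have hb : ∃ a : ℕ, ∀ j : Fin 8, (x - y) j ≠ 0 → a ≤ (j : ℕ) ∧ (j : ℕ) < a + 4 := by
    refine ⟨min p q, fun j hj => ?_⟩
    have hne : x j ≠ 0 ∨ y j ≠ 0 := by
      by_contra h
      push_neg at h
      simp [Pi.sub_apply, h.1, h.2] at hj
    rcases hne with h | h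
    · have := hx j h; omega
    · have := hy j h; omega
  have := reigerIsBurst4_eq_zero hxy hb
  exact sub_eq_zero.mp this

theorem triple_eq {x y z : Fin 8 → F} {px py pz : ℕ}
    (hx : ∀ j : Fin 8, x j ≠ 0 → px ≤ (j : ℕ) ∧ (j : ℕ) < px + 3)
    (hy : ∀ j : Fin 8, y j ≠ 0 → py ≤ (j : ℕ) ∧ (j : ℕ) < py + 3)
    (hz : ∀ j : Fin 8, z j ≠ 0 → pz ≤ (j : ℕ) ∧ (j : ℕ) < pz + 3)
    (hgxy : px + 2 ≤ py) (hgyz : py + 2 ≤ pz) (hpz5 : pz ≤ 5)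
    (hxy : x - y ∈ reigerCode F) (hyz : y - z ∈ reigerCode F)
    (hxz : x - z ∈ reigerCode F) :
    x = y ∨ y = z ∨ x = z := by
  obtain ⟨a1, a2, a3, a4⟩ := mem_reigerCode.mp hxy
  obtain ⟨b1, b2, b3, b4⟩ := mem_reigerCode.mp hyz
  obtain ⟨d1, d2, d3, d4⟩ := mem_reigerCode.mp hxz
  simp only [Pi.sub_apply] at a1 a2 a3 a4 b1 b2 b3 b4 d1 d2 d3 d4
  have hpx1 : px ≤ 1 := by omega
  have hpy3 : py ≤ 3 := by omega
  interval_cases px <;> interval_cases py <;> interval_cases pz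
  · -- (0,2,4) : y = z
    have hx3 : x 3 = 0 := win_zero hx 3 (by omega)
    have hx4 : x 4 = 0 := win_zero hx 4 (by omega)
    have hx5 : x 5 = 0 := win_zero hx 5 (by omega)
    have hx6 : x 6 = 0 := win_zero hx 6 (by omega)
    have hx7 : x 7 = 0 := win_zero hx 7 (by omega)
    have hy0 : y 0 = 0 := win_zero hy 0 (by omega)
    have hy1 : y 1 = 0 := win_zero hy 1 (by omega)
    have hy5 : y 5 = 0 := win_zero hy 5 (by omega)
    have hy6 : y 6 = 0 := win_zero hy 6 (by omega)
    have hy7 : y 7 = 0 := win_zero hy 7 (by omega)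
    have hz0 : z 0 = 0 := win_zero hz 0 (by omega)
    have hz1 : z 1 = 0 := win_zero hz 1 (by omega)
    have hz2 : z 2 = 0 := win_zero hz 2 (by omega)
    have hz3 : z 3 = 0 := win_zero hz 3 (by omega)
    have hz7 : z 7 = 0 := win_zero hz 7 (by omega)
    have e1 : x 1 = 0 := by linear_combination a1 + hy1 + hx5 - hy5
    have e2 : z 5 = 0 := by linear_combination d1 - e1 + hz1 + hx5
    have e3 : y 3 = y 2 := by linear_combination b4 + hz3 - hz2 + hy7 - hz7
    have e4 : x 2 = 0 := by linear_combination -a4 + hx3 - e3 - hx7 + hy7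
    have e5 : y 2 = 0 := by linear_combination -a2 + e4 - hx6 + hy6
    have e6 : y 3 = 0 := by linear_combination e3 + e5
    have e7 : z 6 = 0 := by linear_combination b2 - e5 + hz2 + hy6
    have e8 : y 4 = z 4 := by linear_combination b3 + hy0 - hz0 + hy1 - hz1
    refine Or.inr (Or.inl ?_)
    have g0 : y 0 = z 0 := by linear_combination hy0 - hz0
    have g1 : y 1 = z 1 := by linear_combination hy1 - hz1
    have g2 : y 2 = z 2 := by linear_combination e5 - hz2
    have g3 : y 3 = z 3 := by linear_combination e6 - hz3
    have g4 : y 4 = z 4 := by linear_combination e8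
    have g5 : y 5 = z 5 := by linear_combination hy5 - e2
    have g6 : y 6 = z 6 := by linear_combination hy6 - e7
    have g7 : y 7 = z 7 := by linear_combination hy7 - hz7
    funext j; fin_cases j <;> assumption
  · -- (0,2,5) : x = y
    have hx3 : x 3 = 0 := win_zero hx 3 (by omega)
    have hx4 : x 4 = 0 := win_zero hx 4 (by omega)
    have hx5 : x 5 = 0 := win_zero hx 5 (by omega)
    have hx6 : x 6 = 0 := win_zero hx 6 (by omega)
    have hx7 : x 7 = 0 := win_zero hx 7 (by omega)
    have hy0 : y 0 = 0 := win_zero hy 0 (by omega)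
    have hy1 : y 1 = 0 := win_zero hy 1 (by omega)
    have hy5 : y 5 = 0 := win_zero hy 5 (by omega)
    have hy6 : y 6 = 0 := win_zero hy 6 (by omega)
    have hy7 : y 7 = 0 := win_zero hy 7 (by omega)
    have hz0 : z 0 = 0 := win_zero hz 0 (by omega)
    have hz1 : z 1 = 0 := win_zero hz 1 (by omega)
    have hz2 : z 2 = 0 := win_zero hz 2 (by omega)
    have hz3 : z 3 = 0 := win_zero hz 3 (by omega)
    have hz4 : z 4 = 0 := win_zero hz 4 (by omega)
    have e1 : x 1 = 0 := by linear_combination a1 + hy1 + hx5 - hy5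
    have e2 : y 4 = 0 := by linear_combination b3 + hz4 + hy0 - hz0 + hy1 - hz1
    have e3 : x 0 = 0 := by linear_combination -a3 + hx4 - e2 + hy0 - e1 + hy1
    have e4 : x 2 = y 2 := by linear_combination a2 + hx6 - hy6
    have e5 : y 3 = 0 := by linear_combination -a4 + hx3 - e4 - hx7 + hy7
    refine Or.inl ?_
    have g0 : x 0 = y 0 := by linear_combination e3 - hy0
    have g1 : x 1 = y 1 := by linear_combination e1 - hy1
    have g2 : x 2 = y 2 := by linear_combination e4
    have g3 : x 3 = y 3 := by linear_combination hx3 - e5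
    have g4 : x 4 = y 4 := by linear_combination hx4 - e2
    have g5 : x 5 = y 5 := by linear_combination hx5 - hy5
    have g6 : x 6 = y 6 := by linear_combination hx6 - hy6
    have g7 : x 7 = y 7 := by linear_combination hx7 - hy7
    funext j; fin_cases j <;> assumption
  · -- (0,3,5) : y = z
    have hx3 : x 3 = 0 := win_zero hx 3 (by omega)
    have hx4 : x 4 = 0 := win_zero hx 4 (by omega)
    have hx5 : x 5 = 0 := win_zero hx 5 (by omega)
    have hx6 : x 6 = 0 := win_zero hx 6 (by omega)
    have hx7 : x 7 = 0 := win_zero hx 7 (by omega)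
    have hy0 : y 0 = 0 := win_zero hy 0 (by omega)
    have hy1 : y 1 = 0 := win_zero hy 1 (by omega)
    have hy2 : y 2 = 0 := win_zero hy 2 (by omega)
    have hy6 : y 6 = 0 := win_zero hy 6 (by omega)
    have hy7 : y 7 = 0 := win_zero hy 7 (by omega)
    have hz0 : z 0 = 0 := win_zero hz 0 (by omega)
    have hz1 : z 1 = 0 := win_zero hz 1 (by omega)
    have hz2 : z 2 = 0 := win_zero hz 2 (by omega)
    have hz3 : z 3 = 0 := win_zero hz 3 (by omega)
    have hz4 : z 4 = 0 := win_zero hz 4 (by omega)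
    have e1 : x 2 = 0 := by linear_combination a2 + hy2 + hx6 - hy6
    have e2 : z 6 = 0 := by linear_combination d2 - e1 + hz2 + hx6
    have e3 : x 0 + x 1 = 0 := by linear_combination -d3 + hx4 - hz4 + hz0 + hz1
    have e4 : y 4 = 0 := by linear_combination -a3 + hx4 - e3 + hy0 + hy1
    have e5 : y 5 = z 5 := by linear_combination a1 - d1 + hy1 - hz1
    have e6 : y 3 = 0 := by linear_combination -a4 + hx3 - e1 + hy2 - hx7 + hy7
    have e7 : z 7 = 0 := by linear_combination d4 - hx3 + hz3 + e1 - hz2 + hx7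
    refine Or.inr (Or.inl ?_)
    have g0 : y 0 = z 0 := by linear_combination hy0 - hz0
    have g1 : y 1 = z 1 := by linear_combination hy1 - hz1
    have g2 : y 2 = z 2 := by linear_combination hy2 - hz2
    have g3 : y 3 = z 3 := by linear_combination e6 - hz3
    have g4 : y 4 = z 4 := by linear_combination e4 - hz4
    have g5 : y 5 = z 5 := by linear_combination e5
    have g6 : y 6 = z 6 := by linear_combination hy6 - e2
    have g7 : y 7 = z 7 := by linear_combination hy7 - e7
    funext j; fin_cases j <;> assumption
  · -- (1,3,5) : x = y
    have hx0 : x 0 = 0 := win_zero hx 0 (by omega)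
    have hx4 : x 4 = 0 := win_zero hx 4 (by omega)
    have hx5 : x 5 = 0 := win_zero hx 5 (by omega)
    have hx6 : x 6 = 0 := win_zero hx 6 (by omega)
    have hx7 : x 7 = 0 := win_zero hx 7 (by omega)
    have hy0 : y 0 = 0 := win_zero hy 0 (by omega)
    have hy1 : y 1 = 0 := win_zero hy 1 (by omega)
    have hy2 : y 2 = 0 := win_zero hy 2 (by omega)
    have hy6 : y 6 = 0 := win_zero hy 6 (by omega)
    have hy7 : y 7 = 0 := win_zero hy 7 (by omega)
    have hz0 : z 0 = 0 := win_zero hz 0 (by omega)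
    have hz1 : z 1 = 0 := win_zero hz 1 (by omega)
    have hz2 : z 2 = 0 := win_zero hz 2 (by omega)
    have hz3 : z 3 = 0 := win_zero hz 3 (by omega)
    have hz4 : z 4 = 0 := win_zero hz 4 (by omega)
    have e1 : x 2 = 0 := by linear_combination a2 + hy2 + hx6 - hy6
    have e2 : y 4 = 0 := by linear_combination b3 + hz4 + hy0 - hz0 + hy1 - hz1
    have e3 : x 1 = 0 := by linear_combination -a3 + hx4 - e2 - hx0 + hy0 + hy1
    have e4 : y 5 = 0 := by linear_combination a1 - e3 + hy1 + hx5
    have e5 : x 3 = y 3 := by linear_combination a4 + e1 - hy2 + hx7 - hy7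
    refine Or.inl ?_
    have g0 : x 0 = y 0 := by linear_combination hx0 - hy0
    have g1 : x 1 = y 1 := by linear_combination e3 - hy1
    have g2 : x 2 = y 2 := by linear_combination e1 - hy2
    have g3 : x 3 = y 3 := by linear_combination e5
    have g4 : x 4 = y 4 := by linear_combination hx4 - e2
    have g5 : x 5 = y 5 := by linear_combination hx5 - e4
    have g6 : x 6 = y 6 := by linear_combination hx6 - hy6
    have g7 : x 7 = y 7 := by linear_combination hx7 - hy7
    funext j; fin_cases j <;> assumption

end ReigerAux

-- AUX END

/-- Over every finite field `F = GF(q)` (`q` any prime power)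
there is a linear code `C ⊆ F⁸` of dimension `4` (hence redundancy `4`) such
that (i) no nonzero codeword of `C` is a `4`-burst (so `C` detects any single
`3`-burst error), and (ii) no three distinct `3`-bursts lie in the same coset
of `C`, i.e. `C` has a `(2,3)`-burst list decoder. Since `4 < (1 + 1/2)·3`,
the generalized Reiger bound fails when the hypothesis `(ℓ+1)τ ≤ n` (or
`ℓ ∣ τ` with `2τ ≤ n`) is weakened to merely `2τ ≤ n`. -/
theorem Reiger_fails_without_length_condition (F : Type*) [Field F] [Fintype F] :
    ∃ C : Submodule F (Fin 8 → F),
      Module.finrank F C = 4 ∧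
      (∀ c ∈ C, IsBurst 4 c → c = 0) ∧
      ¬ ∃ e : Fin 3 → (Fin 8 → F), Function.Injective e ∧
          (∀ i, IsBurst 3 (e i)) ∧ ∀ i j, e i - e j ∈ C := by
  refine ⟨reigerCode F, finrank_reigerCode, fun c hc hb => reigerIsBurst4_eq_zero hc hb, ?_⟩
  rintro ⟨e, einj, hburst, hC⟩
  have hw : ∀ i : Fin 3, ∃ p, p ≤ 5 ∧ ∀ j : Fin 8, e i j ≠ 0 → p ≤ (j : ℕ) ∧ (j : ℕ) < p + 3 := by
    intro i
    obtain ⟨p, hp⟩ := hburst i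
    refine ⟨min p 5, by omega, fun j hj => ?_⟩
    have h1 := hp j hj
    have h2 : (j : ℕ) < 8 := j.isLt
    omega
  choose p hp5 hp using hw
  have gap : ∀ i j : Fin 3, i ≠ j → p i + 2 ≤ p j ∨ p j + 2 ≤ p i := by
    intro i j hij
    by_contra h
    push_neg at h
    exact hij (einj (close_eq (hp i) (hp j) (by omega) (by omega) (hC i j)))
  have g01 := gap 0 1 (by decide)
  have g02 := gap 0 2 (by decide)
  have g12 := gap 1 2 (by decide)
  rcases g01 with h01 | h01 <;> rcases g02 with h02 | h02 <;> rcases g12 with h12 | h12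
  · rcases triple_eq (hp 0) (hp 1) (hp 2) h01 h12 (hp5 2) (hC 0 1) (hC 1 2) (hC 0 2) with h | h | h <;>
      exact absurd (einj h) (by decide)
  · rcases triple_eq (hp 0) (hp 2) (hp 1) h02 h12 (hp5 1) (hC 0 2) (hC 2 1) (hC 0 1) with h | h | h <;>
      exact absurd (einj h) (by decide)
  · omega
  · rcases triple_eq (hp 2) (hp 0) (hp 1) h02 h01 (hp5 1) (hC 2 0) (hC 0 1) (hC 2 1) with h | h | h <;>
      exact absurd (einj h) (by decide)
  · rcases triple_eq (hp 1) (hp 0) (hp 2) h01 h02 (hp5 2) (hC 1 0) (hC 0 2) (hC 1 2) with h | h | h <;>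
      exact absurd (einj h) (by decide)
  · omega
  · rcases triple_eq (hp 1) (hp 2) (hp 0) h12 h02 (hp5 0) (hC 1 2) (hC 2 0) (hC 1 0) with h | h | h <;>
      exact absurd (einj h) (by decide)
  · rcases triple_eq (hp 2) (hp 1) (hp 0) h12 h01 (hp5 0) (hC 2 1) (hC 1 0) (hC 2 0) with h | h | h <;>
      exact absurd (einj h) (by decide)
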